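/- Let z ∈ ℂ with Re z > 0, let u : ℝ → ℂ be continuous and 2π-periodic, and define (R_z u)(η) := ∫₀^∞ e^{−zξ} u(η − ξ) dξ. Then for every k ∈ ℤ, the k-th Fourier coefficient of R_z u equals û_k/(z + i·k), where û_k := (1/(2π))∫₀^{2π} u(η)·e^{−ikη} dη is the k-th Fourier coefficient of u. -/

import Mathlib

open MeasureTheory

open Set Filter intervalIntegral Topology


lemma cexp_norm (c : ℂ) (x : ℝ) : ‖Complex.exp (-c * x)‖ = Real.exp (-c.re * x) := by
  rw [Complex.norm_exp]
  congr 1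
  simp [Complex.mul_re]

lemma integrableOn_cexp {c : ℂ} (hc : 0 < c.re) :
    IntegrableOn (fun x : ℝ => Complex.exp (-c * x)) (Set.Ioi (0:ℝ)) := by
  apply Integrable.mono' (exp_neg_integrableOn_Ioi 0 hc)
  · exact (Complex.continuous_exp.comp (by continuity)).aestronglyMeasurable.restrict
  · filter_upwards with x
    rw [cexp_norm]

lemma integral_cexp {c : ℂ} (hc : 0 < c.re) :
    ∫ x in Set.Ioi (0:ℝ), Complex.exp (-c * x) = 1 / c := by
  have hc0 : c ≠ 0 := fun h => by simp [h] at hc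
  have hderiv : ∀ x ∈ Ici (0:ℝ), HasDerivAt (fun x : ℝ => -Complex.exp (-c * x) / c)
      (Complex.exp (-c * x)) x := by
    intro x _
    have h1 : HasDerivAt (fun w : ℂ => -Complex.exp (-c * w) / c)
        (Complex.exp (-c * (x:ℂ))) (x:ℂ) := by
      have := ((Complex.hasDerivAt_exp (-c * x)).comp (x:ℂ)
        ((hasDerivAt_id (x:ℂ)).const_mul (-c))).neg.div_const c
      rw [mul_one, mul_neg, neg_neg, mul_div_assoc, div_self hc0, mul_one] at this
      exact this
    exact h1.comp_ofReal
  have htend : Tendsto (fun x : ℝ => -Complex.exp (-c * x) / c) atTop (𝓝 (-0 / c)) := by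
    apply Tendsto.div_const
    apply Tendsto.neg
    rw [tendsto_zero_iff_norm_tendsto_zero]
    simp only [cexp_norm]
    have : Tendsto (fun x : ℝ => c.re * x) atTop atTop :=
      Tendsto.const_mul_atTop hc tendsto_id
    have h2 : Tendsto (fun x : ℝ => Real.exp (-(c.re * x))) atTop (𝓝 0) :=
      Real.tendsto_exp_neg_atTop_nhds_zero.comp this
    simpa [neg_mul] using h2
  have := integral_Ioi_of_hasDerivAt_of_tendsto' hderiv (integrableOn_cexp hc) htend
  rw [this]
  simp
  field_simp

lemma eIk_periodic (k : ℤ) : Function.Periodic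
    (fun η : ℝ => Complex.exp (-Complex.I * (k:ℂ) * (η:ℂ))) (2 * Real.pi) := by
  intro x
  push_cast
  rw [show -Complex.I * (k:ℂ) * ((x:ℂ) + 2 * Real.pi) =
      -Complex.I * (k:ℂ) * (x:ℂ) + (-k : ℤ) * (2 * Real.pi * Complex.I) by push_cast; ring,
    Complex.exp_add, Complex.exp_int_mul_two_pi_mul_I, mul_one]

/-- shift lemma -/
lemma shift_integral (u : ℝ → ℂ) (hu : Continuous u)
    (hper : Function.Periodic u (2 * Real.pi)) (k : ℤ) (ξ : ℝ) :
    ∫ η in (0:ℝ)..(2 * Real.pi), u (η - ξ) * Complex.exp (-Complex.I * (k:ℂ) * (η:ℂ)) =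
      Complex.exp (-Complex.I * (k:ℂ) * (ξ:ℂ)) *
        ∫ η in (0:ℝ)..(2 * Real.pi), u η * Complex.exp (-Complex.I * (k:ℂ) * (η:ℂ)) := by
  set e : ℝ → ℂ := fun η : ℝ => Complex.exp (-Complex.I * (k:ℂ) * (η:ℂ)) with he
  set g : ℝ → ℂ := fun t => u t * e (t + ξ) with hg
  have hep : Function.Periodic e (2 * Real.pi) := by rw [he]; exact eIk_periodic k
  have hgp : Function.Periodic g (2 * Real.pi) := by
    intro x
    simp only [hg]
    rw [hper x, show x + 2 * Real.pi + ξ = (x + ξ) + 2 * Real.pi by ring, hep (x + ξ)]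
  have h1 : ∀ η : ℝ, u (η - ξ) * e η = g (η - ξ) := by
    intro η
    simp only [hg, sub_add_cancel]
  have h2 : ∀ t : ℝ, g t = e ξ * (u t * e t) := by
    intro t
    simp only [hg, he]
    push_cast
    rw [show -Complex.I * (k:ℂ) * ((t:ℂ) + (ξ:ℂ)) =
      -Complex.I * (k:ℂ) * (t:ℂ) + -Complex.I * (k:ℂ) * (ξ:ℂ) by ring, Complex.exp_add]
    ring
  calc ∫ η in (0:ℝ)..(2 * Real.pi), u (η - ξ) * e η
      = ∫ η in (0:ℝ)..(2 * Real.pi), g (η - ξ) := by simp_rw [h1]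
    _ = ∫ η in (0:ℝ) - ξ..(2 * Real.pi - ξ), g η := intervalIntegral.integral_comp_sub_right g ξ
    _ = ∫ η in (-ξ)..(-ξ + 2 * Real.pi), g η := by rw [zero_sub, sub_eq_neg_add, add_comm]
    _ = ∫ η in (0:ℝ)..(0 + 2 * Real.pi), g η := hgp.intervalIntegral_add_eq (-ξ) 0
    _ = e ξ * ∫ η in (0:ℝ)..(2 * Real.pi), u η * e η := by
      rw [zero_add, ← intervalIntegral.integral_const_mul]
      congr 1 with t
      exact h2 t

lemma eIk_norm (k : ℤ) (η : ℝ) : ‖Complex.exp (-Complex.I * (k:ℂ) * (η:ℂ))‖ = 1 := by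
  rw [Complex.norm_exp]
  have : (-Complex.I * (k:ℂ) * (η:ℂ)).re = 0 := by
    simp [Complex.mul_re, Complex.mul_im]
  rw [this, Real.exp_zero]

/-- The `k`-th Fourier coefficient of a `2π`-periodic function `v : ℝ → ℂ`. -/
noncomputable def fourierCoef (k : ℤ) (v : ℝ → ℂ) : ℂ :=
  (1 / (2 * Real.pi)) *
    ∫ η in (0 : ℝ)..(2 * Real.pi), v η * Complex.exp (-Complex.I * (k : ℂ) * (η : ℂ))

/-- the `k`-th Fourier coefficient of `R_z u` is `û_k / (z + i k)`. -/
theorem resolvent_fourier_coeff (z : ℂ) (hz : 0 < z.re) (u : ℝ → ℂ)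
    (hu : Continuous u) (hper : Function.Periodic u (2 * Real.pi)) (k : ℤ) :
    fourierCoef k
        (fun η : ℝ => ∫ ξ in Set.Ioi (0 : ℝ), Complex.exp (-z * (ξ : ℂ)) * u (η - ξ)) =
      fourierCoef k u / (z + Complex.I * (k : ℂ)) := by
  have hπ : (0:ℝ) ≤ 2 * Real.pi := by positivity
  set c : ℂ := z + Complex.I * (k:ℂ) with hcdef
  have hcre : 0 < c.re := by
    have : c.re = z.re := by
      simp [hcdef, Complex.add_re, Complex.mul_re]
    rw [this]; exact hz
  -- bound on u
  obtain ⟨C, hC⟩ : ∃ C : ℝ, ∀ x, ‖u x‖ ≤ C := by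
    obtain ⟨C, hC⟩ := (isCompact_Icc (a := (0:ℝ)) (b := 2 * Real.pi)).exists_bound_of_continuousOn
      hu.continuousOn
    refine ⟨C, fun x => ?_⟩
    obtain ⟨y, hy, hxy⟩ := hper.exists_mem_Ico₀ (by positivity) x
    rw [hxy]
    exact hC y (Set.mem_Icc.mpr ⟨hy.1, hy.2.le⟩)
  set e : ℝ → ℂ := fun η : ℝ => Complex.exp (-Complex.I * (k:ℂ) * (η:ℂ)) with he
  set A : ℂ := ∫ η in (0:ℝ)..(2 * Real.pi), u η * e η with hA
  set f : ℝ → ℝ → ℂ := fun η ξ => Complex.exp (-z * (ξ:ℂ)) * u (η - ξ) * e η with hf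
  have hint : Integrable (Function.uncurry f)
      ((volume.restrict (Set.Ioc (0:ℝ) (2 * Real.pi))).prod (volume.restrict (Set.Ioi (0:ℝ)))) := by
    apply Integrable.mono' (g := fun p : ℝ × ℝ => C * Real.exp (-z.re * p.2))
    · exact Integrable.mul_prod
        (integrableOn_const (C := C) measure_Ioc_lt_top.ne)
        (exp_neg_integrableOn_Ioi 0 hz)
    · apply Continuous.aestronglyMeasurable
      simp only [hf, he, Function.uncurry]
      fun_prop
    · filter_upwards with p
      simp only [hf, he, Function.uncurry]
      rw [norm_mul, norm_mul, cexp_norm, eIk_norm, mul_one]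
      calc Real.exp (-z.re * p.2) * ‖u (p.1 - p.2)‖
          ≤ Real.exp (-z.re * p.2) * C := by
            apply mul_le_mul_of_nonneg_left (hC _) (Real.exp_nonneg _)
        _ = C * Real.exp (-z.re * p.2) := mul_comm _ _
  have step2 : ∀ ξ : ℝ, (∫ η in Set.Ioc (0:ℝ) (2 * Real.pi), f η ξ)
      = Complex.exp (-c * (ξ:ℂ)) * A := by
    intro ξ
    rw [← intervalIntegral.integral_of_le hπ]
    have : ∀ η : ℝ, f η ξ = Complex.exp (-z * (ξ:ℂ)) * (u (η - ξ) * e η) := by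
      intro η; simp only [hf]; ring
    simp_rw [this]
    rw [intervalIntegral.integral_const_mul, he, shift_integral u hu hper k ξ,
      ← mul_assoc, ← Complex.exp_add]
    congr 2
    simp only [hcdef]
    push_cast
    ring
  calc fourierCoef k (fun η : ℝ => ∫ ξ in Set.Ioi (0:ℝ), Complex.exp (-z * (ξ:ℂ)) * u (η - ξ))
      = (1 / (2 * Real.pi)) *
        ∫ η in Set.Ioc (0:ℝ) (2 * Real.pi), ∫ ξ in Set.Ioi (0:ℝ), f η ξ := by
        rw [fourierCoef, ← intervalIntegral.integral_of_le hπ]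
        congr 1
        apply intervalIntegral.integral_congr
        intro η _
        simp only [hf, he]
        exact (MeasureTheory.integral_mul_const _ _).symm
    _ = (1 / (2 * Real.pi)) *
        ∫ ξ in Set.Ioi (0:ℝ), ∫ η in Set.Ioc (0:ℝ) (2 * Real.pi), f η ξ :=
        by rw [MeasureTheory.integral_integral_swap hint]
    _ = (1 / (2 * Real.pi)) * ∫ ξ in Set.Ioi (0:ℝ), Complex.exp (-c * (ξ:ℂ)) * A := by
        congr 1
        exact setIntegral_congr_fun measurableSet_Ioi (fun ξ _ => step2 ξ)
    _ = (1 / (2 * Real.pi)) * ((1 / c) * A) := by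
        rw [MeasureTheory.integral_mul_const, integral_cexp hcre]
    _ = fourierCoef k u / c := by
        have hc0 : c ≠ 0 := fun h => by simp [h] at hcre
        rw [fourierCoef]
        simp only [hA, he]
        field_simp
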